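/- arXiv:2207.02828 — 2 statements merged into one kernel-verified Lean document; each statement's English description precedes it below -/
import Mathlib

section
/- Let (g, D) be an axial pair for an action of G on X and set M = m(e), where m(h) is the minimal m such that for every w with hwD unbounded, X = wD_{[-m,m]} ∪ gⁿD_{[-m,m]} for some n. If w ∈ G is wild (not tame), then there exists i ∈ ℤ such that w(gⁱD) is unbounded, and for every such i, the set wD_{[i-M,i+M]} contains X − D_{[a,a+2M]} for some a ∈ ℤ. -/
open Pointwise

section AxialDefs

variable {G : Type*} [Group G] {X : Type*} [MulAction G X]

/-- A subset of `X` is *bounded* (w.r.t. `g` and the fundamental domain `D`)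
if it is contained in a finite union of translates `g^i • D`. -/
def Bdd (g : G) (D : Set X) (B : Set X) : Prop :=
  ∃ s : Finset ℤ, B ⊆ ⋃ i ∈ s, (g ^ i) • D

/-- An element is *tame* if it translates bounded sets to bounded sets. -/
def Tame (g : G) (D : Set X) (t : G) : Prop :=
  ∀ B : Set X, Bdd g D B → Bdd g D (t • B)

/-- `D` is a fundamental domain for the action of `⟨g⟩`: `X` is the disjoint
union of the translates `g^n • D`. -/
def FundDom (g : G) (D : Set X) : Prop :=
  ∀ x : X, ∃! n : ℤ, x ∈ (g ^ n) • D

/-- `(g, D)` is an *axial pair*. -/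
def AxialPair (g : G) (D : Set X) : Prop :=
  FundDom g D ∧
  {t : G | Tame g D t ∧ (t • D ∩ D).Nonempty}.Finite ∧
  ∀ h : G, ∃ B : Set X, Bdd g D B ∧
    ∀ w : G, ¬ Bdd g D ((h * w) • D) →
      ∃ n : ℤ, w • B ∪ (g ^ n) • B = Set.univ

/-- The interval `D_{[a,b]} = ∪_{i=a}^{b} g^i • D`. -/
def Dint (g : G) (D : Set X) (a b : ℤ) : Set X :=
  ⋃ i ∈ Set.Icc a b, (g ^ i) • D

/-- `m` witnesses Axiom 2 (in the interval form (2')) for `h`. -/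
def mOK (g : G) (D : Set X) (h : G) (m : ℕ) : Prop :=
  ∀ w : G, ¬ Bdd g D ((h * w) • D) →
    ∃ n : ℤ, w • Dint g D (-(m : ℤ)) (m : ℤ) ∪ (g ^ n) • Dint g D (-(m : ℤ)) (m : ℤ) = Set.univ

/-- `m(h)`: the minimal `m` as in Axiom (2'). -/
noncomputable def mval (g : G) (D : Set X) (h : G) : ℕ :=
  sInf {m : ℕ | mOK g D h m}

/-- `I(w) = {i ∈ ℤ : w·(gⁱD) is unbounded}`. -/
def Iset (g : G) (D : Set X) (w : G) : Set ℤ :=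
  {i : ℤ | ¬ Bdd g D ((w * g ^ i) • D)}

/-- The wilderness center `i(w) = ⌊(min I(w) + max I(w))/2⌋`. -/
noncomputable def ic (g : G) (D : Set X) (w : G) : ℤ :=
  Int.fdiv (sInf (Iset g D w) + sSup (Iset g D w)) 2

end AxialDefs

section Aux

variable {G : Type*} [Group G] {X : Type*} [MulAction G X]

lemma smul_Dint (g : G) (D : Set X) (k a b : ℤ) :
    (g ^ k) • Dint g D a b = Dint g D (a + k) (b + k) := by
  unfold Dint
  ext x
  simp only [Set.smul_set_iUnion, Set.mem_iUnion, Set.mem_Icc, exists_prop]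
  constructor
  · rintro ⟨i, ⟨h1, h2⟩, hx⟩
    rw [← mul_smul, ← zpow_add] at hx
    exact ⟨k + i, ⟨by omega, by omega⟩, hx⟩
  · rintro ⟨i, ⟨h1, h2⟩, hx⟩
    refine ⟨i - k, ⟨by omega, by omega⟩, ?_⟩
    rw [← mul_smul, ← zpow_add]
    have : k + (i - k) = i := by omega
    rwa [this]

lemma mOK_exists (g : G) (D : Set X) (hax : AxialPair g D) : ∃ m, mOK g D 1 m := by
  obtain ⟨B, ⟨s, hBs⟩, hB⟩ := hax.2.2 1
  refine ⟨s.sup (fun i => i.natAbs), fun v hv => ?_⟩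
  obtain ⟨n, hn⟩ := hB v hv
  set m : ℕ := s.sup (fun i => i.natAbs) with hm
  have hBD : B ⊆ Dint g D (-(m : ℤ)) (m : ℤ) := by
    intro x hx
    obtain ⟨i, hi, hxi⟩ := by simpa using hBs hx
    have : i.natAbs ≤ m := Finset.le_sup (f := fun i => i.natAbs) hi
    simp only [Dint, Set.mem_iUnion, Set.mem_Icc, exists_prop]
    exact ⟨i, ⟨by omega, by omega⟩, hxi⟩
  refine ⟨n, Set.eq_univ_of_univ_subset ?_⟩
  rw [← hn]
  exact Set.union_subset_union (Set.smul_set_mono hBD) (Set.smul_set_mono hBD)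

end Aux

/-- for a wild element `w` there is `i` with `w·(gⁱD)` unbounded, and for
every such `i`, `w·D_{[i-M,i+M]}` contains `X − D_{[a,a+2M]}` for some `a`. -/
theorem wild_cobounded_image {G : Type*} [Group G] {X : Type*} [MulAction G X]
    [Nonempty X] (g : G) (D : Set X) (hax : AxialPair g D)
    (w : G) (hw : ¬ Tame g D w) :
    (∃ i : ℤ, ¬ Bdd g D ((w * g ^ i) • D)) ∧
    ∀ i : ℤ, ¬ Bdd g D ((w * g ^ i) • D) →
      ∃ a : ℤ, Set.univ \ Dint g D a (a + 2 * (mval g D 1 : ℤ)) ⊆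
        w • Dint g D (i - (mval g D 1 : ℤ)) (i + (mval g D 1 : ℤ)) := by
  have hM : mOK g D 1 (mval g D 1) := Nat.sInf_mem (mOK_exists g D hax)
  constructor
  · -- existence of an unbounded translate
    by_contra hcon
    push_neg at hcon
    apply hw
    intro B ⟨s, hBs⟩
    choose t ht using hcon
    refine ⟨s.biUnion t, ?_⟩
    rintro x ⟨y, hy, rfl⟩
    obtain ⟨i, hi, hyi⟩ := by simpa using hBs hy
    have : w • y ∈ (w * g ^ i) • D := by
      rw [mul_smul]
      exact Set.smul_mem_smul_set hyi
    have := ht i this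
    simp only [Set.mem_iUnion, exists_prop] at this ⊢
    obtain ⟨j, hj, hxj⟩ := this
    exact ⟨j, Finset.mem_biUnion.mpr ⟨i, hi, hj⟩, hxj⟩
  · intro i hi
    set M : ℤ := (mval g D 1 : ℤ) with hMdef
    have h1 : ¬ Bdd g D ((1 * (w * g ^ i)) • D) := by rwa [one_mul]
    obtain ⟨n, hn⟩ := hM (w * g ^ i) h1
    refine ⟨n - M, ?_⟩
    have e1 : (w * g ^ i) • Dint g D (-M) M = w • Dint g D (i - M) (i + M) := by
      rw [mul_smul, smul_Dint, show -M + i = i - M from by omega,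
        show M + i = i + M from by omega]
    have e2 : (g ^ n) • Dint g D (-M) M = Dint g D (n - M) (n - M + 2 * M) := by
      rw [smul_Dint, show -M + n = n - M from by omega,
        show M + n = n - M + 2 * M from by omega]
    rw [e1, e2] at hn
    intro x hx
    have : x ∈ w • Dint g D (i - M) (i + M) ∪ Dint g D (n - M) (n - M + 2 * M) := by
      rw [hn]; trivial
    rcases this with h | h
    · exact h
    · exact absurd h hx.2
end

section
/- Let (g, D) be an axial pair for an action of G on X. An element w ∈ G is wild (i.e., not tame) if and only if there exists a bounded subset B ⊆ X such that wB is cobounded (its complement in X is bounded). -/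
open Pointwise

section AxialDefs

variable {G : Type*} [Group G] {X : Type*} [MulAction G X]

lemma bdd_mono {g : G} {D B B' : Set X} (h : B ⊆ B') (hb : Bdd g D B') : Bdd g D B := by
  obtain ⟨s, hs⟩ := hb; exact ⟨s, h.trans hs⟩

lemma bdd_union {g : G} {D B C : Set X} (hb : Bdd g D B) (hc : Bdd g D C) :
    Bdd g D (B ∪ C) := by
  obtain ⟨s, hs⟩ := hb; obtain ⟨t, ht⟩ := hc
  refine ⟨s ∪ t, Set.union_subset (hs.trans ?_) (ht.trans ?_)⟩ <;>
  · intro x hx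
    simp only [Set.mem_iUnion] at hx ⊢
    obtain ⟨i, hi, hxi⟩ := hx
    exact ⟨i, by simp [hi], hxi⟩

lemma bdd_pow_smul {g : G} {D B : Set X} (n : ℤ) (hb : Bdd g D B) :
    Bdd g D ((g ^ n) • B) := by
  obtain ⟨s, hs⟩ := hb
  refine ⟨s.image (· + n), ?_⟩
  rintro x ⟨y, hy, rfl⟩
  have := hs hy
  simp only [Set.mem_iUnion] at this ⊢
  obtain ⟨i, hi, hyi⟩ := this
  refine ⟨i + n, Finset.mem_image.2 ⟨i, hi, rfl⟩, ?_⟩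
  rw [add_comm, zpow_add, mul_smul]
  exact Set.smul_mem_smul_set hyi

lemma bdd_biUnion {g : G} {D : Set X} {f : ℤ → Set X} (s : Finset ℤ)
    (h : ∀ i ∈ s, Bdd g D (f i)) : Bdd g D (⋃ i ∈ s, f i) := by
  classical
  choose t ht using h
  refine ⟨s.attach.biUnion (fun i => t i i.2), ?_⟩
  intro x hx
  simp only [Set.mem_iUnion] at hx
  obtain ⟨i, hi, hxi⟩ := hx
  have := ht i hi hxi
  simp only [Set.mem_iUnion] at this ⊢
  obtain ⟨j, hj, hxj⟩ := this
  exact ⟨j, Finset.mem_biUnion.2 ⟨⟨i, hi⟩, s.mem_attach _, hj⟩, hxj⟩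

lemma not_bdd_univ [Nonempty X] {g : G} {D : Set X} (hfd : FundDom g D) :
    ¬ Bdd g D (Set.univ : Set X) := by
  rintro ⟨s, hs⟩
  obtain ⟨x⟩ := ‹Nonempty X›
  obtain ⟨m, hm, -⟩ := hfd x
  obtain ⟨d, hd, -⟩ := hm
  obtain ⟨n, hn⟩ := Infinite.exists_notMem_finset s
  have hy : (g ^ n) • d ∈ ⋃ i ∈ s, (g ^ i) • D := hs (Set.mem_univ _)
  simp only [Set.mem_iUnion] at hy
  obtain ⟨i, hi, hyi⟩ := hy
  obtain ⟨k, -, huniq⟩ := hfd ((g ^ n) • d)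
  have h1 : n = i := by
    rw [huniq n (Set.smul_mem_smul_set hd), huniq i hyi]
  exact hn (h1 ▸ hi)

end AxialDefs

/-- `w` is wild iff there is a bounded `B` with `w • B` cobounded. -/
theorem wild_iff_cobounded {G : Type*} [Group G] {X : Type*} [MulAction G X]
    [Nonempty X] (g : G) (D : Set X) (hax : AxialPair g D) (w : G) :
    ¬ Tame g D w ↔ ∃ B : Set X, Bdd g D B ∧ Bdd g D ((w • B)ᶜ) := by
  constructor
  · intro hnt
    rw [Tame] at hnt
    push_neg at hnt
    obtain ⟨B₀, hB₀, hwB₀⟩ := hnt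
    obtain ⟨s, hs⟩ := hB₀
    -- find i ∈ s with (w * g^i) • D unbounded
    have hex : ∃ i ∈ s, ¬ Bdd g D ((w * g ^ i) • D) := by
      by_contra hall
      push_neg at hall
      apply hwB₀
      refine bdd_mono ?_ (bdd_biUnion (f := fun i => (w * g ^ i) • D) s hall)
      rintro x ⟨y, hy, rfl⟩
      have := hs hy
      simp only [Set.mem_iUnion] at this ⊢
      obtain ⟨i, hi, hyi⟩ := this
      exact ⟨i, hi, by rw [mul_smul]; exact Set.smul_mem_smul_set hyi⟩
    obtain ⟨i, -, hiD⟩ := hex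
    obtain ⟨B, hBbdd, hB⟩ := hax.2.2 (w * g ^ i * w⁻¹)
    obtain ⟨n, hn⟩ := hB w (by
      have : w * g ^ i * w⁻¹ * w = w * g ^ i := by group
      rw [this]; exact hiD)
    refine ⟨B, hBbdd, bdd_mono ?_ (bdd_pow_smul n hBbdd)⟩
    intro x hx
    have hxu : x ∈ w • B ∪ (g ^ n) • B := hn ▸ Set.mem_univ x
    exact hxu.resolve_left hx
  · rintro ⟨B, hB, hc⟩ ht
    have hwB := ht B hB
    have : Bdd g D (Set.univ : Set X) := by
      rw [← Set.union_compl_self (w • B)]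
      exact bdd_union hwB hc
    exact not_bdd_univ hax.1 this
end
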